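/- Let 0 < α < γ < 1, α' ∈ (0,1], let k, t ≥ 1 be integers, and let F be a set of probability measures on a measurable space Ω. Suppose there exists C ⊆ F such that: (i) for every f ∈ F there is c ∈ C with dTV(f,c) ≤ α, and (ii) for every f ∈ F, the set {c ∈ C : dTV(f,c) ≤ γ} has at most t elements. Let D = ⋃_{s=1}^k { (w, f) ∈ Δ_s × F^s : w_i ≥ α'/k for all i } be the class of (k, α'/k)-dense mixtures over F, represented as tuples of varying length s ≤ k, with κ_mix between mixtures with different numbers of components defined to be +∞. Then there exists J ⊆ ⋃_{s=1}^k (Δ_s × F^s) such that: (i) every element of D is within κ_mix-distance α of some element of J, and (ii) for every element g of D, the set of elements of J within κ_mix-distance γ of g has at most k!·t^k·⌈k/α⌉^k elements. -/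

import Mathlib

open MeasureTheory
open scoped ENNReal

/-- Total variation distance between two measures:
`dTV(μ,ν) = sup` over measurable sets `A` of `|μ(A) − ν(A)|`. -/
noncomputable def tvDist {Ω : Type*} [MeasurableSpace Ω] (μ ν : Measure Ω) : ℝ :=
  ⨆ A : {A : Set Ω // MeasurableSet A}, |(μ A).toReal - (ν A).toReal|

/-- The probability simplex `Δ_s`. -/
def probSimplex (s : ℕ) : Set (Fin s → ℝ) :=
  {w | (∀ i, 0 ≤ w i) ∧ ∑ i, w i = 1}

/-- A mixture with a variable number of components, represented as a tuple
`⟨s, (w, f)⟩` of its number of components `s`, weights `w` and components `f`. -/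
abbrev VarMixture (Ω : Type*) [MeasurableSpace Ω] :=
  Σ s : ℕ, (Fin s → ℝ) × (Fin s → Measure Ω)

/-- The union over `1 ≤ s ≤ k` of `Δ_s × F^s`: mixtures with at most `k`
components, all from `F`. -/
def mixturesUpTo {Ω : Type*} [MeasurableSpace Ω] (k : ℕ) (F : Set (Measure Ω)) :
    Set (VarMixture Ω) :=
  {g | 1 ≤ g.1 ∧ g.1 ≤ k ∧ g.2.1 ∈ probSimplex g.1 ∧ ∀ i, g.2.2 i ∈ F}

/-- The class of `(k, η)`-dense mixtures over `F`: mixtures with `s ≤ k`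
components from `F` and all weights at least `η`. -/
def denseMixtures {Ω : Type*} [MeasurableSpace Ω] (k : ℕ) (η : ℝ)
    (F : Set (Measure Ω)) : Set (VarMixture Ω) :=
  {g | g ∈ mixturesUpTo k F ∧ ∀ i, η ≤ g.2.1 i}

/-- The component-wise distance `κ_mix` between two mixtures, valued in `ℝ≥0∞`:
for mixtures with the same number `s` of components it is the min over
permutations `π` of the max over components of
`max (s·|w_i − w'_{π(i)}|, dTV(f_i, f'_{π(i)}))`; for mixtures with different
numbers of components it is `+∞`. -/
noncomputable def kappaMixE {Ω : Type*} [MeasurableSpace Ω]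
    (p q : VarMixture Ω) : ℝ≥0∞ :=
  if h : p.1 = q.1 then
    ENNReal.ofReal (⨅ π : Equiv.Perm (Fin p.1), ⨆ i : Fin p.1,
      max ((p.1 : ℝ) * |p.2.1 i - q.2.1 (Fin.cast h (π i))|)
        (tvDist (p.2.2 i) (q.2.2 (Fin.cast h (π i)))))
  else ⊤

/-!
Take `J` to be the mixtures with components in `C` and weights on the grid `ℕ / ⌈s / α⌉`.
Largest-remainder rounding of the weights keeps them in the simplex and moves each by at most
`α / s`; replacing every component by an `α`-close element of `C` then gives the cover.
A member of `J` within `κ_mix`-distance `γ` of `(w, f)` is determined by a permutation `π` and,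
for each `i`, a grid weight within `γ / s` of `w i` (at most `⌈k / α⌉` of them, as `γ < 1`) and
an element of `C` within `γ` of `f i` (at most `t` of them): `s! · ⌈k / α⌉ ^ s · t ^ s` in all.
-/

open Finset in
theorem exists_nat_round_sum_eq {ι : Type*} [Fintype ι] (x : ι → ℝ) (hx : ∀ i, 0 ≤ x i)
    (N : ℕ) (hsum : ∑ i, x i = N) :
    ∃ m : ι → ℕ, ∑ i, m i = N ∧ ∀ i, |x i - m i| ≤ 1 := by
  classical
  have hfloor_sum : ∑ i, ⌊x i⌋₊ ≤ N := by
    have : ∑ i, (⌊x i⌋₊ : ℝ) ≤ N := hsum ▸ sum_le_sum fun i _ => Nat.floor_le (hx i)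
    exact_mod_cast this
  have hdeficit : N - ∑ i, ⌊x i⌋₊ ≤ #(univ : Finset ι) := by
    have : (N : ℝ) ≤ ∑ i, ((⌊x i⌋₊ : ℝ) + 1) :=
      hsum ▸ sum_le_sum fun i _ => (Nat.lt_floor_add_one (x i)).le
    rw [sum_add_distrib, sum_const, nsmul_one] at this
    have : N ≤ ∑ i, ⌊x i⌋₊ + #(univ : Finset ι) := by exact_mod_cast this
    omega
  obtain ⟨R, -, hR⟩ := exists_subset_card_eq hdeficit
  refine ⟨fun i => ⌊x i⌋₊ + if i ∈ R then 1 else 0, ?_, fun i => ?_⟩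
  · rw [sum_add_distrib, sum_boole, Finset.filter_mem_eq_inter, univ_inter, hR]
    simp only [Nat.cast_id]
    omega
  · have h₁ := Nat.floor_le (hx i)
    have h₂ := Nat.lt_floor_add_one (x i)
    rw [abs_le]
    dsimp only
    split_ifs <;> push_cast <;> constructor <;> linarith

def gridPoints (N : ℕ) : Set ℝ := Set.range fun m : ℕ => (m : ℝ) / N

theorem exists_gridPoints_approx_of_mem_probSimplex {s N : ℕ} (hN : 0 < N) {w : Fin s → ℝ}
    (hw : w ∈ probSimplex s) :
    ∃ w' ∈ probSimplex s, (∀ i, w' i ∈ gridPoints N) ∧ ∀ i, |w i - w' i| ≤ 1 / N := by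
  have hN' : (0 : ℝ) < N := by exact_mod_cast hN
  obtain ⟨m, hm_sum, hm_close⟩ := exists_nat_round_sum_eq (fun i => N * w i)
    (fun i => mul_nonneg hN'.le (hw.1 i)) N (by rw [← Finset.mul_sum, hw.2, mul_one])
  refine ⟨fun i => m i / N, ⟨fun i => by positivity, ?_⟩, fun i => ⟨m i, rfl⟩, fun i => ?_⟩
  · rw [← Finset.sum_div, ← Nat.cast_sum, hm_sum, div_self hN'.ne']
  · rw [show w i - m i / N = (N * w i - m i) / N by field_simp, abs_div, Nat.abs_cast]
    exact div_le_div_of_nonneg_right (hm_close i) hN'.le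

theorem encard_gridPoints_inter_Icc_le {N : ℕ} (hN : 0 < N) {a b : ℝ} (hab : b < a + 1) :
    (gridPoints N ∩ Set.Icc a b).encard ≤ N := by
  have hN' : (0 : ℝ) < N := by exact_mod_cast hN
  have hsub : gridPoints N ∩ Set.Icc a b ⊆
      (fun m : ℕ => (m : ℝ) / N) '' Set.Ico ⌈a * N⌉₊ (⌈a * N⌉₊ + N) := by
    rintro _ ⟨⟨m, rfl⟩, hma, hmb⟩
    rw [le_div_iff₀ hN'] at hma
    rw [div_le_iff₀ hN'] at hmb
    refine ⟨m, ⟨Nat.ceil_le.mpr hma, ?_⟩, rfl⟩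
    have : (m : ℝ) < ⌈a * N⌉₊ + N := by nlinarith [Nat.le_ceil (a * N)]
    exact_mod_cast this
  calc _ ≤ _ := Set.encard_le_encard hsub
    _ ≤ (Set.Ico ⌈a * N⌉₊ (⌈a * N⌉₊ + N)).encard := Set.encard_image_le _ _
    _ = N := by simp [Set.encard_eq_coe_toFinset_card]

theorem encard_setOf_exists_perm_forall_mem_le {ι β : Type*} [Fintype ι] [DecidableEq ι]
    (S : ι → Set β) :
    {v : ι → β | ∃ σ : Equiv.Perm ι, ∀ i, v (σ i) ∈ S i}.encard ≤
      (Fintype.card ι).factorial * ∏ i, (S i).encard := by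
  have hunion : {v : ι → β | ∃ σ : Equiv.Perm ι, ∀ i, v (σ i) ∈ S i} =
      ⋃ σ : Equiv.Perm ι, (fun v => v ∘ σ) ⁻¹' Set.univ.pi S := by
    ext; simp
  rw [hunion]
  calc _ ≤ ∑ σ : Equiv.Perm ι, ((fun v => v ∘ σ) ⁻¹' Set.univ.pi S).encard :=
        Set.encard_iUnion_le_of_fintype _
    _ = ∑ σ : Equiv.Perm ι, ∏ i, (S i).encard := by
      refine Finset.sum_congr rfl fun σ _ => ?_
      rw [Set.encard_preimage_of_bijective σ.bijective.comp_right, Set.encard_pi_eq_prod_encard]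
    _ = _ := by simp [Fintype.card_perm]

theorem le_one_of_mem_probSimplex {s : ℕ} {w : Fin s → ℝ} (hw : w ∈ probSimplex s) (i : Fin s) :
    w i ≤ 1 :=
  hw.2 ▸ Finset.single_le_sum (fun j _ => hw.1 j) (Finset.mem_univ i)

-- The constraint `y ≤ 1` is what keeps the window short enough when `s = 1`.
theorem encard_weightWindow_le {s N : ℕ} (hs : 1 ≤ s) (hN : 0 < N) {w : Fin s → ℝ}
    (hw : w ∈ probSimplex s) {γ : ℝ} (hγ : γ < 1) (i : Fin s) :
    {y ∈ gridPoints N | y ≤ 1 ∧ s * |w i - y| ≤ γ}.encard ≤ N := by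
  have hs' : (0 : ℝ) < s := by exact_mod_cast hs
  suffices ∃ a b : ℝ, b < a + 1 ∧ ∀ y, y ≤ 1 → s * |w i - y| ≤ γ → y ∈ Set.Icc a b by
    obtain ⟨a, b, hab, hwindow⟩ := this
    refine le_trans (Set.encard_le_encard ?_) (encard_gridPoints_inter_Icc_le hN hab)
    exact fun y ⟨hy, hy₁, hyγ⟩ => ⟨hy, hwindow y hy₁ hyγ⟩
  rcases hs.eq_or_lt with rfl | hs₂
  · have hwi : w i = 1 := by simpa [Subsingleton.elim i 0] using hw.2
    refine ⟨1 - γ, 1, by linarith, fun y hy₁ hyγ => ⟨?_, hy₁⟩⟩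
    rw [hwi, Nat.cast_one, one_mul, abs_le] at hyγ
    linarith
  · have hs₂' : (2 : ℝ) ≤ s := by exact_mod_cast hs₂
    refine ⟨w i - γ / s, w i + γ / s, ?_, fun y _ hyγ => ?_⟩
    · have : 2 * γ < s := by linarith
      have : 2 * (γ / s) < 1 := by rw [← mul_div_assoc, div_lt_one hs']; exact this
      linarith
    · rw [← le_div_iff₀' hs', abs_le] at hyγ
      constructor <;> linarith

theorem mixturesUpTo_mono {Ω : Type*} [MeasurableSpace Ω] (k : ℕ) {F F' : Set (Measure Ω)}
    (h : F ⊆ F') : mixturesUpTo k F ⊆ mixturesUpTo k F' :=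
  fun _ ⟨hs, hsk, hw, hf⟩ => ⟨hs, hsk, hw, fun i => h (hf i)⟩

theorem eq_of_kappaMixE_ne_top {Ω : Type*} [MeasurableSpace Ω] {p q : VarMixture Ω}
    (h : kappaMixE p q ≠ ⊤) : p.1 = q.1 := by
  by_contra hpq
  exact h (dif_neg hpq)

section kappaMixE

variable {Ω : Type*} [MeasurableSpace Ω] {s : ℕ} {w w' : Fin s → ℝ} {f c : Fin s → Measure Ω}
  {r : ℝ}

theorem kappaMixE_mk_mk :
    kappaMixE ⟨s, (w, f)⟩ ⟨s, (w', c)⟩ =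
      ENNReal.ofReal (⨅ π : Equiv.Perm (Fin s), ⨆ i : Fin s,
        max ((s : ℝ) * |w i - w' (π i)|) (tvDist (f i) (c (π i)))) := by
  simp [kappaMixE]

theorem kappaMixE_mk_mk_le_ofReal (hr : 0 ≤ r) (hw : ∀ i, s * |w i - w' i| ≤ r)
    (hf : ∀ i, tvDist (f i) (c i) ≤ r) :
    kappaMixE ⟨s, (w, f)⟩ ⟨s, (w', c)⟩ ≤ ENNReal.ofReal r := by
  rw [kappaMixE_mk_mk]
  refine ENNReal.ofReal_le_ofReal ((ciInf_le (Set.finite_range _).bddBelow 1).trans ?_)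
  exact Real.iSup_le (fun i => max_le (hw i) (hf i)) hr

theorem exists_perm_of_kappaMixE_mk_mk_le_ofReal (hr : 0 ≤ r)
    (h : kappaMixE ⟨s, (w, f)⟩ ⟨s, (w', c)⟩ ≤ ENNReal.ofReal r) :
    ∃ π : Equiv.Perm (Fin s), ∀ i, s * |w i - w' (π i)| ≤ r ∧ tvDist (f i) (c (π i)) ≤ r := by
  rw [kappaMixE_mk_mk, ENNReal.ofReal_le_ofReal_iff hr] at h
  obtain ⟨π, hπ⟩ := exists_eq_ciInf_of_finite (f := fun π : Equiv.Perm (Fin s) =>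
    ⨆ i : Fin s, max ((s : ℝ) * |w i - w' (π i)|) (tvDist (f i) (c (π i))))
  exact ⟨π, fun i => max_le_iff.mp ((le_ciSup (Set.finite_range _).bddAbove i).trans (hπ ▸ h))⟩

end kappaMixE

section GridCover

variable {Ω : Type*} [MeasurableSpace Ω]

/-- The mesh `1 / ⌈s / α⌉` is fine enough that rounding moves each `s * w i` by at most `α`. -/
def gridMixtures (k : ℕ) (α : ℝ) (C : Set (Measure Ω)) : Set (VarMixture Ω) :=
  {j | j ∈ mixturesUpTo k C ∧ ∀ i, j.2.1 i ∈ gridPoints ⌈(j.1 : ℝ) / α⌉₊}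

theorem exists_mem_gridMixtures_kappaMixE_le {k : ℕ} {α : ℝ} (hα : 0 < α)
    {F C : Set (Measure Ω)} (hcover : ∀ f ∈ F, ∃ c ∈ C, tvDist f c ≤ α)
    {g : VarMixture Ω} (hg : g ∈ mixturesUpTo k F) :
    ∃ j ∈ gridMixtures k α C, kappaMixE g j ≤ ENNReal.ofReal α := by
  obtain ⟨s, w, f⟩ := g
  obtain ⟨hs, hsk, hw, hf⟩ := hg
  have hs' : (0 : ℝ) < s := by exact_mod_cast hs
  have hQ : 0 < ⌈(s : ℝ) / α⌉₊ := Nat.ceil_pos.mpr (div_pos hs' hα)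
  obtain ⟨w', hw', hgrid, hclose⟩ := exists_gridPoints_approx_of_mem_probSimplex hQ hw
  choose c hcC hcf using fun i => hcover (f i) (hf i)
  refine ⟨⟨s, (w', c)⟩, ⟨⟨hs, hsk, hw', hcC⟩, hgrid⟩,
    kappaMixE_mk_mk_le_ofReal hα.le (fun i => ?_) hcf⟩
  calc (s : ℝ) * |w i - w' i| ≤ s * (1 / ⌈(s : ℝ) / α⌉₊) := by gcongr; exact hclose i
    _ ≤ s * (1 / (s / α)) := by gcongr; exact Nat.le_ceil _
    _ = α := by field_simp

theorem encard_setOf_gridMixtures_kappaMixE_le {k t : ℕ} {α γ : ℝ} (hα : 0 < α)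
    (hγ₀ : 0 ≤ γ) (hγ : γ < 1) {F C : Set (Measure Ω)}
    (hsmall : ∀ f ∈ F, {c ∈ C | tvDist f c ≤ γ}.encard ≤ t)
    {g : VarMixture Ω} (hg : g ∈ mixturesUpTo k F) :
    {j ∈ gridMixtures k α C | kappaMixE g j ≤ ENNReal.ofReal γ}.encard ≤
      k.factorial * t ^ k * ⌈(k : ℝ) / α⌉₊ ^ k := by
  obtain ⟨s, w, f⟩ := g
  obtain ⟨hs, hsk, hw, hf⟩ := hg
  set Q := ⌈(s : ℝ) / α⌉₊
  set N := ⌈(k : ℝ) / α⌉₊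
  have hQ : 0 < Q := Nat.ceil_pos.mpr (div_pos (by exact_mod_cast hs) hα)
  have hQN : Q ≤ N := Nat.ceil_mono (by gcongr)
  set W : Fin s → Set ℝ := fun i => {y ∈ gridPoints Q | y ≤ 1 ∧ s * |w i - y| ≤ γ}
  set T : Fin s → Set (Measure Ω) := fun i => {c ∈ C | tvDist (f i) c ≤ γ}
  have hsub : {j ∈ gridMixtures k α C | kappaMixE ⟨s, (w, f)⟩ j ≤ ENNReal.ofReal γ} ⊆
      (fun v : Fin s → ℝ × Measure Ω => (⟨s, (Prod.fst ∘ v, Prod.snd ∘ v)⟩ : VarMixture Ω)) ''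
        {v | ∃ π : Equiv.Perm (Fin s), ∀ i, v (π i) ∈ W i ×ˢ T i} := by
    rintro ⟨s', w', c'⟩ ⟨⟨⟨-, -, hw', hc'⟩, hgrid⟩, hκ⟩
    obtain rfl : s = s' := eq_of_kappaMixE_ne_top (ne_top_of_le_ne_top ENNReal.ofReal_ne_top hκ)
    obtain ⟨π, hπ⟩ := exists_perm_of_kappaMixE_mk_mk_le_ofReal hγ₀ hκ
    exact ⟨fun i => (w' i, c' i), ⟨π, fun i =>
      ⟨⟨hgrid _, le_one_of_mem_probSimplex hw' _, (hπ i).1⟩, hc' _, (hπ i).2⟩⟩, rfl⟩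
  have hcount : s.factorial * (Q * t) ^ s ≤ k.factorial * t ^ k * N ^ k := by
    rcases t.eq_zero_or_pos with rfl | ht
    · simp [Nat.pos_iff_ne_zero.mp hs]
    calc s.factorial * (Q * t) ^ s ≤ k.factorial * (N * t) ^ k := by
          gcongr
          exact Nat.one_le_iff_ne_zero.mpr (Nat.mul_ne_zero (by omega) (by omega))
      _ = k.factorial * t ^ k * N ^ k := by ring
  calc _ ≤ _ := Set.encard_le_encard hsub
    _ ≤ _ := Set.encard_image_le _ _
    _ ≤ s.factorial * ∏ i, (W i ×ˢ T i).encard := by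
      simpa using encard_setOf_exists_perm_forall_mem_le fun i => W i ×ˢ T i
    _ ≤ s.factorial * ∏ _i : Fin s, ((Q * t : ℕ) : ℕ∞) := by
      gcongr with i
      rw [Set.encard_prod, Nat.cast_mul]
      exact mul_le_mul' (encard_weightWindow_le hs hQ hw hγ i) (hsmall _ (hf i))
    _ ≤ _ := by simpa using (Nat.cast_le (α := ℕ∞)).mpr hcount

end GridCover

theorem denseMixtures_locally_small_cover_general
    {Ω : Type*} [MeasurableSpace Ω]
    (α γ α' : ℝ) (hα : 0 < α) (hαγ : α < γ) (hγ : γ < 1)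
    (k t : ℕ)
    (F : Set (Measure Ω))
    (C : Set (Measure Ω)) (hCF : C ⊆ F)
    (hcover : ∀ f ∈ F, ∃ c ∈ C, tvDist f c ≤ α)
    (hsmall : ∀ f ∈ F, ({c ∈ C | tvDist f c ≤ γ}).Finite ∧
              ({c ∈ C | tvDist f c ≤ γ}).ncard ≤ t) :
    ∃ J ⊆ mixturesUpTo k F,
      (∀ g ∈ denseMixtures k (α' / k) F, ∃ j ∈ J, kappaMixE g j ≤ ENNReal.ofReal α) ∧
      (∀ g ∈ denseMixtures k (α' / k) F,
        ({j ∈ J | kappaMixE g j ≤ ENNReal.ofReal γ}).Finite ∧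
        ({j ∈ J | kappaMixE g j ≤ ENNReal.ofReal γ}).ncard
          ≤ Nat.factorial k * t ^ k * (⌈(k : ℝ) / α⌉₊) ^ k) := by
  refine ⟨gridMixtures k α C, fun j hj => mixturesUpTo_mono k hCF hj.1,
    fun g hg => exists_mem_gridMixtures_kappaMixE_le hα hcover hg.1,
    fun g hg => ?_⟩
  have hsmall' : ∀ f ∈ F, {c ∈ C | tvDist f c ≤ γ}.encard ≤ t := fun f hf =>
    Set.encard_le_coe_iff_finite_ncard_le.mpr (hsmall f hf)
  rw [← Set.encard_le_coe_iff_finite_ncard_le]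
  exact_mod_cast encard_setOf_gridMixtures_kappaMixE_le hα (hα.trans hαγ).le hγ hsmall' hg.1

theorem denseMixtures_locally_small_cover
    {Ω : Type*} [MeasurableSpace Ω]
    (α γ α' : ℝ) (hα : 0 < α) (hαγ : α < γ) (hγ : γ < 1) (hα' : α' ∈ Set.Ioc (0 : ℝ) 1)
    (k t : ℕ) (hk : 1 ≤ k) (ht : 1 ≤ t)
    (F : Set (Measure Ω)) (hF : ∀ f ∈ F, IsProbabilityMeasure f)
    (C : Set (Measure Ω)) (hCF : C ⊆ F)
    (hcover : ∀ f ∈ F, ∃ c ∈ C, tvDist f c ≤ α)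
    (hsmall : ∀ f ∈ F, ({c ∈ C | tvDist f c ≤ γ}).Finite ∧
              ({c ∈ C | tvDist f c ≤ γ}).ncard ≤ t) :
    ∃ J ⊆ mixturesUpTo k F,
      (∀ g ∈ denseMixtures k (α' / k) F, ∃ j ∈ J, kappaMixE g j ≤ ENNReal.ofReal α) ∧
      (∀ g ∈ denseMixtures k (α' / k) F,
        ({j ∈ J | kappaMixE g j ≤ ENNReal.ofReal γ}).Finite ∧
        ({j ∈ J | kappaMixE g j ≤ ENNReal.ofReal γ}).ncard
          ≤ Nat.factorial k * t ^ k * (⌈(k : ℝ) / α⌉₊) ^ k) :=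
  denseMixtures_locally_small_cover_general α γ α' hα hαγ hγ k t F C hCF hcover hsmall
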